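/- arXiv:2106.07510 — 2 statements merged into one kernel-verified Lean document; each statement's English description precedes it below -/
import Mathlib

section
/- Let T : ℝ → ℝ₊ be measurable and bounded, G : ℝ₊ × ℝ → ℝ continuous and bounded, and define ρ(r,θ) = (1/(G(r,θ) r^{n-1})) ∫_r^{T(θ)} G(s,θ) s^{n-1} ds on D = {(r,θ) : 0 < r < T(θ)}. Then for every compactly supported C¹ function ϕ̃ on D̄ (smooth in r), one has -∫∫_D ρ(r,θ) G(r,θ) r^{n-1} ∂_r ϕ̃(r,θ) dr dθ = ∫_Θ ϕ̃(0,θ) (∫_0^{T(θ)} G(s,θ) s^{n-1} ds) dθ - ∫∫_D ϕ̃(r,θ) G(r,θ) r^{n-1} dr dθ, assuming G ≥ m > 0. -/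
open Set MeasureTheory intervalIntegral

/-!
For fixed `θ`, the hypothesis on `ρ` says that `ρ G r^(n-1)` is the outgoing flux
`∫_r^{T θ} G s^(n-1) ds`, whose `r`-derivative is `-G r^(n-1)` and which vanishes at `r = T θ`;
integrating by parts in `r` gives the identity on every ray. The rays can then be integrated over
`Θ` term by term, since each radial integral is a continuous function of `(θ, T θ)` and hence
bounded on the bounded set `Θ × [0, sup T]`.
-/
theorem integral_tail_mul_deriv {g f : ℝ → ℝ} (hg : Continuous g) (hf : ContDiff ℝ 1 f)
    (a b : ℝ) :
    ∫ r in a..b, (∫ s in r..b, g s) * deriv f r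
      = (∫ r in a..b, f r * g r) - f a * ∫ s in a..b, g s := by
  have htail : ∀ x ∈ uIcc a b, HasDerivAt (fun r => ∫ s in r..b, g s) (-g x) x := fun x _ =>
    integral_hasDerivAt_left (hg.intervalIntegrable x b) (hg.stronglyMeasurableAtFilter _ _)
      hg.continuousAt
  have hf' : ∀ x ∈ uIcc a b, HasDerivAt f (deriv f x) x := fun x _ =>
    (hf.differentiable one_ne_zero x).hasDerivAt
  rw [integral_mul_deriv_eq_deriv_mul htail hf' (hg.intervalIntegrable a b).neg
    ((hf.continuous_deriv le_rfl).intervalIntegrable a b), integral_same]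
  simp only [neg_mul, intervalIntegral.integral_neg, mul_comm (g _)]
  ring

theorem integral_mul_deriv_of_mul_eq_tail {ρ w f : ℝ → ℝ} {a b : ℝ} (hab : a ≤ b)
    (hw : Continuous w) (hf : ContDiff ℝ 1 f) (hρ : ∀ r ∈ Ioc a b, ρ r * w r = ∫ s in r..b, w s) :
    ∫ r in a..b, ρ r * w r * deriv f r = (∫ r in a..b, f r * w r) - f a * ∫ s in a..b, w s := by
  rw [← integral_tail_mul_deriv hw hf]
  refine intervalIntegral.integral_congr_ae (.of_forall fun r hr => ?_)
  rw [hρ r (uIoc_of_le hab ▸ hr)]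

theorem continuous_intervalIntegral_slice {h : ℝ × ℝ → ℝ} (hh : Continuous h) (a : ℝ) :
    Continuous fun q : ℝ × ℝ => ∫ s in a..q.2, h (s, q.1) :=
  continuous_parametric_primitive_of_continuous (f := fun θ s => h (s, θ))
    (hh.comp continuous_swap)

theorem integrableOn_comp_prodMk {X E : Type*} [MetricSpace X] [ProperSpace X] [MeasurableSpace X]
    [BorelSpace X] [NormedAddCommGroup E] {μ : Measure X} [IsFiniteMeasureOnCompacts μ]
    {F : X × ℝ → E} (hF : Continuous F) {T : X → ℝ} (hT : Measurable T)
    (hTbd : Bornology.IsBounded (range T)) {Θ : Set X} (hΘ : Bornology.IsBounded Θ) :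
    IntegrableOn (fun θ => F (θ, T θ)) Θ μ := by
  obtain ⟨C, hC⟩ :=
    (hΘ.isCompact_closure.prod hTbd.isCompact_closure).exists_bound_of_continuousOn hF.continuousOn
  refine IntegrableOn.mono_set ?_ subset_closure
  refine Measure.integrableOn_of_bounded hΘ.isCompact_closure.measure_lt_top.ne
    (hF.comp_stronglyMeasurable (measurable_id.prodMk hT).stronglyMeasurable).aestronglyMeasurable
    (ae_restrict_of_forall_mem isClosed_closure.measurableSet fun θ hθ => hC _ ⟨hθ, ?_⟩)
  exact subset_closure (mem_range_self θ)

theorem otd_weak_mk_equation_general (n : ℕ) (m CT : ℝ)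
    (hm : 0 < m)
    (Θ : Set ℝ) (hΘbd : Bornology.IsBounded Θ)
    (T : ℝ → ℝ) (hTmeas : Measurable T)
    (hTpos : ∀ θ, 0 < T θ) (hTbd : ∀ θ, T θ ≤ CT)
    (G : ℝ × ℝ → ℝ) (hG : Continuous G)
    (hGm : ∀ p, m ≤ G p)
    (ρ : ℝ × ℝ → ℝ)
    (hρ : ∀ p : ℝ × ℝ, ρ p =
      (∫ s in p.1..(T p.2), G (s, p.2) * s ^ (n - 1)) / (G p * p.1 ^ (n - 1)))
    (ϕ : ℝ × ℝ → ℝ) (hϕ : ContDiff ℝ 1 ϕ) :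
    -(∫ θ in Θ, ∫ r in (0:ℝ)..(T θ),
        ρ (r, θ) * G (r, θ) * r ^ (n - 1) * deriv (fun r' => ϕ (r', θ)) r)
      = (∫ θ in Θ, ϕ (0, θ) * ∫ s in (0:ℝ)..(T θ), G (s, θ) * s ^ (n - 1))
        - ∫ θ in Θ, ∫ r in (0:ℝ)..(T θ), ϕ (r, θ) * G (r, θ) * r ^ (n - 1) := by
  have hg : Continuous fun p : ℝ × ℝ => G p * p.1 ^ (n - 1) := hG.mul (continuous_fst.pow _)
  have hslice : ∀ θ, ∫ r in (0:ℝ)..T θ,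
        ρ (r, θ) * G (r, θ) * r ^ (n - 1) * deriv (fun r' => ϕ (r', θ)) r
      = (∫ r in (0:ℝ)..T θ, ϕ (r, θ) * G (r, θ) * r ^ (n - 1))
        - ϕ (0, θ) * ∫ s in (0:ℝ)..T θ, G (s, θ) * s ^ (n - 1) := by
    intro θ
    have hflux : ∀ r ∈ Ioc 0 (T θ),
        ρ (r, θ) * (G (r, θ) * r ^ (n - 1)) = ∫ s in r..T θ, G (s, θ) * s ^ (n - 1) := by
      rintro r ⟨hr, -⟩
      rw [hρ, div_mul_cancel₀]
      exact mul_ne_zero (hm.trans_le (hGm _)).ne' (pow_pos hr _).ne'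
    simpa only [mul_assoc] using integral_mul_deriv_of_mul_eq_tail (hTpos θ).le
      (w := fun s => G (s, θ) * s ^ (n - 1)) (f := fun r => ϕ (r, θ))
      (hg.comp (.prodMk_left θ)) (hϕ.comp (contDiff_id.prodMk contDiff_const)) hflux
  have hTrange : Bornology.IsBounded (range T) :=
    (Metric.isBounded_Icc 0 CT).subset (range_subset_iff.2 fun θ => ⟨(hTpos θ).le, hTbd θ⟩)
  have hA : IntegrableOn (fun θ => ϕ (0, θ) * ∫ s in (0:ℝ)..T θ, G (s, θ) * s ^ (n - 1)) Θ :=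
    integrableOn_comp_prodMk
      (F := fun q => ϕ (0, q.1) * ∫ s in (0:ℝ)..q.2, G (s, q.1) * s ^ (n - 1))
      ((hϕ.continuous.comp (continuous_const.prodMk continuous_fst)).mul
        (continuous_intervalIntegral_slice hg 0)) hTmeas hTrange hΘbd
  have hB : IntegrableOn
      (fun θ => ∫ r in (0:ℝ)..T θ, ϕ (r, θ) * G (r, θ) * r ^ (n - 1)) Θ :=
    integrableOn_comp_prodMk
      (F := fun q => ∫ r in (0:ℝ)..q.2, ϕ (r, q.1) * G (r, q.1) * r ^ (n - 1))
      (continuous_intervalIntegral_slice ((hϕ.continuous.mul hG).mul (continuous_fst.pow _)) 0)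
      hTmeas hTrange hΘbd
  simp only [hslice]
  rw [integral_sub hB hA]
  ring

/-- Radial integration by parts identity showing that the pair (u, ρ) with u(r,θ) = -r
and ρ the explicit polar transport density solves the weak Monge–Kantorovich equation:
for every compactly supported C¹ test function ϕ,
-∫∫ ρ G r^(n-1) ∂_r ϕ = ∫_Θ ϕ(0,θ)(∫_0^{T(θ)} G s^(n-1) ds) dθ − ∫∫ ϕ G r^(n-1). -/
theorem otd_weak_mk_equation (n : ℕ) (hn : 2 ≤ n) (m CG CT : ℝ)
    (hm : 0 < m)
    (Θ : Set ℝ) (hΘ : MeasurableSet Θ) (hΘbd : Bornology.IsBounded Θ)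
    (T : ℝ → ℝ) (hTmeas : Measurable T)
    (hTpos : ∀ θ, 0 < T θ) (hTbd : ∀ θ, T θ ≤ CT)
    (G : ℝ × ℝ → ℝ) (hG : Continuous G)
    (hGm : ∀ p, m ≤ G p) (hGbd : ∀ p, G p ≤ CG)
    (ρ : ℝ × ℝ → ℝ)
    (hρ : ∀ p : ℝ × ℝ, ρ p =
      (∫ s in p.1..(T p.2), G (s, p.2) * s ^ (n - 1)) / (G p * p.1 ^ (n - 1)))
    (ϕ : ℝ × ℝ → ℝ) (hϕ : ContDiff ℝ 1 ϕ) (hϕsupp : HasCompactSupport ϕ) :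
    -(∫ θ in Θ, ∫ r in (0:ℝ)..(T θ),
        ρ (r, θ) * G (r, θ) * r ^ (n - 1) * deriv (fun r' => ϕ (r', θ)) r)
      = (∫ θ in Θ, ϕ (0, θ) * ∫ s in (0:ℝ)..(T θ), G (s, θ) * s ^ (n - 1))
        - ∫ θ in Θ, ∫ r in (0:ℝ)..(T θ), ϕ (r, θ) * G (r, θ) * r ^ (n - 1) :=
  otd_weak_mk_equation_general n m CT hm Θ hΘbd T hTmeas hTpos hTbd G hG hGm ρ hρ ϕ hϕ
end

section
/- On the unit sphere S², with d(x) = arccos(x₃) the distance from the north pole p, let u(x) = -d(x) and ρ(x) = (1 + cos d(x))/ sin d(x) on S² \ {p, -p}. Then for every smooth function ϕ on S², ∫_{S²} ρ ⟨∇u, ∇ϕ⟩ dA = 4π ϕ(p) - ∫_{S²} ϕ dA, where ∇ and dA denote the spherical gradient and area measure. -/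
open Real intervalIntegral

/-!
Fix the longitude φ and write ψ(r) = ϕ(r, φ). The factor sin r cancels the singularity of ρ, and
integrating by parts against 1 + cos r, whose derivative is -sin r and which vanishes at r = π,
gives ∫₀^π ρ (-ψ') sin r dr = 2 ψ(0) - ∫₀^π ψ sin r dr. Since ψ(0) = ϕ(p) for every φ,
integrating over φ ∈ [0, 2π] turns 2 ψ(0) into 4π ϕ(p).
-/

theorem integral_div_sin_mul_mul_sin (f g : ℝ → ℝ) :
    ∫ r in (0:ℝ)..π, f r / sin r * g r * sin r = ∫ r in (0:ℝ)..π, f r * g r := by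
  have h_ne_pi : ∀ᵐ r : ℝ, r ≠ π := by simp [MeasureTheory.ae_iff]
  refine integral_congr_ae ?_
  filter_upwards [h_ne_pi] with r hr_ne hr
  rw [Set.uIoc_of_le pi_pos.le] at hr
  have hsin : sin r ≠ 0 := (sin_pos_of_pos_of_lt_pi hr.1 (lt_of_le_of_ne hr.2 hr_ne)).ne'
  field_simp

theorem integral_one_add_cos_mul_neg_deriv {ψ ψ' : ℝ → ℝ}
    (hψ : ∀ r ∈ Set.uIcc (0:ℝ) π, HasDerivAt ψ (ψ' r) r)
    (hψ' : IntervalIntegrable ψ' MeasureTheory.volume 0 π) :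
    ∫ r in (0:ℝ)..π, (1 + cos r) * -ψ' r = 2 * ψ 0 - ∫ r in (0:ℝ)..π, ψ r * sin r := by
  have hcos : ∀ r ∈ Set.uIcc (0:ℝ) π, HasDerivAt (fun r => 1 + cos r) (-sin r) r :=
    fun r _ => (hasDerivAt_cos r).const_add 1
  have hparts := integral_mul_deriv_eq_deriv_mul hcos hψ
    (continuous_sin.neg.intervalIntegrable 0 π) hψ'
  simp only [mul_neg, integral_neg, neg_mul, hparts, cos_pi, cos_zero]
  simp only [mul_comm (sin _)]
  ring

theorem integral_rho_mul_neg_deriv_mul_sin {ψ : ℝ → ℝ} (hψ : ContDiff ℝ 1 ψ) :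
    ∫ r in (0:ℝ)..π, (1 + cos r) / sin r * -deriv ψ r * sin r
      = 2 * ψ 0 - ∫ r in (0:ℝ)..π, ψ r * sin r := by
  rw [integral_div_sin_mul_mul_sin]
  exact integral_one_add_cos_mul_neg_deriv
    (fun r _ => (hψ.differentiable one_ne_zero r).hasDerivAt)
    ((hψ.continuous_deriv le_rfl).intervalIntegrable 0 π)

/-- The Monge–Kantorovich weak equation on the unit sphere S², written in geodesic polar
coordinates (r,φ) around the north pole p: with ρ(r) = (1+cos r)/sin r and u = -r,
∫_0^{2π} ∫_0^π ρ(r) (-∂_r ϕ(r,φ)) sin r dr dφ = 4π ϕ(p) − ∫_0^{2π} ∫_0^π ϕ sin r dr dφ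
for every C¹ test function ϕ (whose value at r = 0 is independent of φ, representing a
function on the sphere). -/
theorem sphere_weak_mk_equation
    (ϕ : ℝ × ℝ → ℝ) (hϕ : ContDiff ℝ 1 ϕ)
    (hpole : ∀ φ : ℝ, ϕ (0, φ) = ϕ (0, 0)) :
    (∫ φ in (0:ℝ)..(2 * π), ∫ r in (0:ℝ)..π,
        ((1 + Real.cos r) / Real.sin r) * (-(deriv (fun r' => ϕ (r', φ)) r)) * Real.sin r)
      = 4 * π * ϕ (0, 0)
        - ∫ φ in (0:ℝ)..(2 * π), ∫ r in (0:ℝ)..π, ϕ (r, φ) * Real.sin r := by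
  have h_meridian : ∀ φ : ℝ, ContDiff ℝ 1 (fun r => ϕ (r, φ)) := fun φ =>
    hϕ.comp (contDiff_id.prodMk contDiff_const)
  have h_inner_cont : Continuous fun φ => ∫ r in (0:ℝ)..π, ϕ (r, φ) * sin r :=
    continuous_parametric_intervalIntegral_of_continuous'
      ((hϕ.continuous.comp (continuous_snd.prodMk continuous_fst)).mul
        (continuous_sin.comp continuous_snd)) 0 π
  calc _ = ∫ φ in (0:ℝ)..(2 * π), (2 * ϕ (0, 0) - ∫ r in (0:ℝ)..π, ϕ (r, φ) * sin r) := by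
        refine integral_congr fun φ _ => ?_
        simp only [integral_rho_mul_neg_deriv_mul_sin (h_meridian φ), hpole φ]
    _ = 4 * π * ϕ (0, 0) - ∫ φ in (0:ℝ)..(2 * π), ∫ r in (0:ℝ)..π, ϕ (r, φ) * sin r := by
        rw [integral_sub intervalIntegrable_const (h_inner_cont.intervalIntegrable _ _),
          integral_const, smul_eq_mul]
        ring
end
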